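/- arXiv:2605.08441 — 2 statements merged into one kernel-verified Lean document; each statement's English description precedes it below -/
import Mathlib

section
/- Surrogate calibration bound: let σ_q, L_q > 0, budget B > 0, and surrogate values ŝ_q ≥ s_floor > 0 with σ_q ≤ σ_high. Let n_q^s = (B/ S̃)·ŝ_q/√(L_q) with S̃ = ∑_k ŝ_k√(L_k) be the plug-in allocation, and V(n) = ∑_q σ_q²/n_q. Then V(n^s) = (S²/B)·E_w[r]·E_w[1/r], where r_q = ŝ_q/σ_q, S = ∑_q σ_q√(L_q), and w_q = σ_q√(L_q)/S; consequently V(n^s) − V* ≤ (S²/B)·E_w[(r−1)²]·(σ_high/s_floor)². -/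
open Finset Real

/-- Surrogate calibration: for the plug-in allocation `n^s_q = (B/S̃)·ŝ_q/√(L_q)`,
`V(n^s) = (S²/B)·E_w[r]·E_w[1/r]` with `r_q = ŝ_q/σ_q`, `w_q = σ_q√(L_q)/S`; consequently
`V(n^s) − V* ≤ (S²/B)·E_w[(r−1)²]·(σ_high/s_floor)²`. -/
theorem stmt_5 (M : ℕ) (hM : 1 ≤ M) (σ L shat : Fin M → ℝ)
    (sfloor σhigh : ℝ) (hsfloor : 0 < sfloor)
    (hσ : ∀ q, 0 < σ q) (hL : ∀ q, 0 < L q)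
    (hshat : ∀ q, sfloor ≤ shat q) (hσhigh : ∀ q, σ q ≤ σhigh)
    (B : ℝ) (hB : 0 < B)
    (S St : ℝ) (hS : S = ∑ k, σ k * Real.sqrt (L k))
    (hSt : St = ∑ k, shat k * Real.sqrt (L k))
    (ns : Fin M → ℝ) (hns : ∀ q, ns q = (B / St) * shat q / Real.sqrt (L q))
    (r w : Fin M → ℝ) (hr : ∀ q, r q = shat q / σ q)
    (hw : ∀ q, w q = σ q * Real.sqrt (L q) / S) :
    (∑ q, (σ q) ^ 2 / ns q) =
      (S ^ 2 / B) * (∑ q, w q * r q) * (∑ q, w q * (1 / r q)) ∧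
    (∑ q, (σ q) ^ 2 / ns q) - S ^ 2 / B ≤
      (S ^ 2 / B) * (∑ q, w q * (r q - 1) ^ 2) * (σhigh / sfloor) ^ 2 := by
  have hne : (Finset.univ : Finset (Fin M)).Nonempty := ⟨⟨0, hM⟩, Finset.mem_univ _⟩
  have hσhigh0 : 0 < σhigh := lt_of_lt_of_le (hσ ⟨0, hM⟩) (hσhigh _)
  have hshat0 : ∀ q, 0 < shat q := fun q => lt_of_lt_of_le hsfloor (hshat q)
  have hsqL : ∀ q, 0 < Real.sqrt (L q) := fun q => Real.sqrt_pos.2 (hL q)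
  have hSpos : 0 < S := by
    rw [hS]; exact Finset.sum_pos (fun q _ => mul_pos (hσ q) (hsqL q)) hne
  have hStpos : 0 < St := by
    rw [hSt]; exact Finset.sum_pos (fun q _ => mul_pos (hshat0 q) (hsqL q)) hne
  have hSne : S ≠ 0 := hSpos.ne'
  have hStne : St ≠ 0 := hStpos.ne'
  have hBne : B ≠ 0 := hB.ne'
  have hwpos : ∀ q, 0 < w q := fun q => by
    rw [hw]; exact div_pos (mul_pos (hσ q) (hsqL q)) hSpos
  have hrpos : ∀ q, 0 < r q := fun q => by
    rw [hr]; exact div_pos (hshat0 q) (hσ q)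
  set m : ℝ := sfloor / σhigh with hm
  have hmpos : 0 < m := div_pos hsfloor hσhigh0
  have hrm : ∀ q, m ≤ r q := fun q => by
    rw [hr, hm]
    exact div_le_div₀ (le_of_lt (hshat0 q)) (hshat q) (hσ q) (hσhigh q)
  -- sum of weights is 1
  have hwsum : ∑ q, w q = 1 := by
    rw [Finset.sum_congr rfl fun q _ => hw q, ← Finset.sum_div, ← hS,
      div_self hSne]
  set E1 : ℝ := ∑ q, w q * r q with hE1
  set E2 : ℝ := ∑ q, w q * (1 / r q) with hE2
  set Q : ℝ := ∑ q, w q * (r q - 1) ^ 2 with hQ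
  set T : ℝ := ∑ q, σ q ^ 2 * Real.sqrt (L q) / shat q with hT
  have hE1eq : E1 = St / S := by
    rw [hE1, hSt, Finset.sum_div]
    refine Finset.sum_congr rfl fun q _ => ?_
    have h1 := (hσ q).ne'
    rw [hw q, hr q]
    field_simp
  have hE2eq : E2 = T / S := by
    rw [hE2, hT, Finset.sum_div]
    refine Finset.sum_congr rfl fun q _ => ?_
    have h1 := (hσ q).ne'
    have h2 := (hshat0 q).ne'
    rw [hw q, hr q]
    field_simp
  have hLHS : (∑ q, (σ q) ^ 2 / ns q) = St / B * T := by
    rw [hT, Finset.mul_sum]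
    refine Finset.sum_congr rfl fun q _ => ?_
    have h1 := (hshat0 q).ne'
    have h2 := (hsqL q).ne'
    rw [hns q]
    field_simp
  have hpart1 : (∑ q, (σ q) ^ 2 / ns q) = (S ^ 2 / B) * E1 * E2 := by
    rw [hLHS, hE1eq, hE2eq]
    field_simp
  have hE1pos : 0 < E1 := by rw [hE1eq]; exact div_pos hStpos hSpos
  have hE1m : m ≤ E1 := by
    calc m = ∑ q, w q * m := by rw [← Finset.sum_mul, hwsum, one_mul]
    _ ≤ E1 := Finset.sum_le_sum fun q _ =>
        mul_le_mul_of_nonneg_left (hrm q) (hwpos q).le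
  -- key quantity
  set A : ℝ := ∑ q, w q * ((r q - E1) ^ 2 / r q) with hA
  have hAeq : A = E1 ^ 2 * E2 - E1 := by
    have hterm : ∀ q, w q * ((r q - E1) ^ 2 / r q)
        = w q * r q - 2 * E1 * w q + E1 ^ 2 * (w q * (1 / r q)) := by
      intro q
      have h0 := (hrpos q).ne'
      field_simp
      ring
    rw [hA, Finset.sum_congr rfl fun q _ => hterm q]
    rw [Finset.sum_add_distrib, Finset.sum_sub_distrib, ← Finset.mul_sum,
      ← Finset.mul_sum, hwsum]
    rw [← hE1, ← hE2]
    ring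
  have hAQ : A ≤ Q / m := by
    have h1 : A ≤ (∑ q, w q * (r q - E1) ^ 2) / m := by
      rw [Finset.sum_div, hA]
      refine Finset.sum_le_sum fun q _ => ?_
      rw [mul_div_assoc]
      exact mul_le_mul_of_nonneg_left
        (div_le_div_of_nonneg_left (sq_nonneg _) hmpos (hrm q)) (hwpos q).le
    have h2 : (∑ q, w q * (r q - E1) ^ 2) ≤ Q := by
      have hexp : ∀ q, w q * (r q - E1) ^ 2
          = w q * (r q - 1) ^ 2 - 2 * (E1 - 1) * (w q * r q - w q)
            + (E1 - 1) ^ 2 * w q := by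
        intro q; ring
      rw [Finset.sum_congr rfl fun q _ => hexp q]
      rw [Finset.sum_add_distrib, Finset.sum_sub_distrib, ← Finset.mul_sum,
        ← Finset.mul_sum, Finset.sum_sub_distrib, hwsum, ← hE1, ← hQ]
      nlinarith [sq_nonneg (E1 - 1)]
    calc A ≤ (∑ q, w q * (r q - E1) ^ 2) / m := h1
      _ ≤ Q / m := by gcongr
  have hAnonneg : 0 ≤ A := by
    rw [hA]
    exact Finset.sum_nonneg fun q _ =>
      mul_nonneg (hwpos q).le (div_nonneg (sq_nonneg _) (hrpos q).le)
  have hkey : E1 * E2 - 1 ≤ Q * (σhigh / sfloor) ^ 2 := by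
    have h1 : E1 * E2 - 1 = A / E1 := by
      rw [hAeq]; field_simp
    have h2 : A / E1 ≤ A / m := by gcongr
    have h3 : A / m ≤ Q / m / m := by gcongr
    have h4 : Q / m / m = Q * (σhigh / sfloor) ^ 2 := by
      rw [hm]
      field_simp
    linarith
  constructor
  · exact hpart1
  · rw [hpart1]
    have hSB : 0 < S ^ 2 / B := div_pos (pow_pos hSpos 2) hB
    calc S ^ 2 / B * E1 * E2 - S ^ 2 / B = S ^ 2 / B * (E1 * E2 - 1) := by ring
      _ ≤ S ^ 2 / B * (Q * (σhigh / sfloor) ^ 2) :=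
          mul_le_mul_of_nonneg_left hkey hSB.le
      _ = S ^ 2 / B * Q * (σhigh / sfloor) ^ 2 := by ring
end

section
/- Full surrogate calibration bound with constants: under σ_low ≤ σ_q ≤ σ_high, L_min ≤ L_q ≤ L_max, ŝ_q ≥ s_floor for all q ∈ {1,...,M}, the plug-in allocation's excess variance satisfies V(n^s) − V* ≤ K·χ²(ŝ,σ)/B, where χ²(ŝ,σ) = (1/M)∑_q (ŝ_q/σ_q − 1)² and K = σ_high² M² L_max ρ / r_min² with ρ = σ_high√(L_max)/(σ_low√(L_min)) and r_min = s_floor/σ_high. -/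
open Finset Real

lemma aux_term (A rm aq ak rq rk : ℝ) (hA : 0 ≤ A) (hrm : 0 < rm)
    (haq : 0 ≤ aq) (hak : 0 ≤ ak) (haqA : aq ≤ A) (hakA : ak ≤ A)
    (hrq : rm ≤ rq) (hrk : rm ≤ rk) :
    aq*rq*(ak/rk) + ak*rk*(aq/rq) - 2*(aq*ak) ≤ (A^2/rm^2)*(rq-rk)^2 := by
  have hrq0 : 0 < rq := lt_of_lt_of_le hrm hrq
  have hrk0 : 0 < rk := lt_of_lt_of_le hrm hrk
  have h1 : aq*rq*(ak/rk) + ak*rk*(aq/rq) - 2*(aq*ak)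
      = (aq*ak*(rq-rk)^2)/(rq*rk) := by
    field_simp
    ring
  rw [h1, div_mul_eq_mul_div, div_le_div_iff₀ (by positivity) (by positivity)]
  have key1 : aq*ak ≤ A^2 := by nlinarith
  have key2 : rm^2 ≤ rq*rk := by nlinarith
  nlinarith [sq_nonneg (rq-rk), mul_le_mul key1 key2 (by positivity) (by positivity),
    mul_nonneg (mul_nonneg haq hak) (sq_nonneg (rq-rk))]

lemma aux_sumsq (M : ℕ) (x : Fin M → ℝ) :
    ∑ q, ∑ k, (x q - x k)^2 ≤ 2*M*∑ q, (x q)^2 := by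
  have expand : ∀ q : Fin M, ∑ k, (x q - x k)^2
      = M*(x q)^2 - 2*(x q)*(∑ k, x k) + ∑ k, (x k)^2 := by
    intro q
    simp only [sub_sq]
    rw [Finset.sum_add_distrib, Finset.sum_sub_distrib, Finset.sum_const,
      Finset.card_univ, Fintype.card_fin, nsmul_eq_mul]
    have : ∑ k, 2 * x q * x k = 2 * x q * ∑ k, x k := by rw [Finset.mul_sum]
    rw [this]
  calc ∑ q, ∑ k, (x q - x k)^2
      = ∑ q, (M*(x q)^2 - 2*(x q)*(∑ k, x k) + ∑ k, (x k)^2) :=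
        Finset.sum_congr rfl (fun q _ => expand q)
    _ = 2*M*(∑ q, (x q)^2) - 2*(∑ q, x q)^2 := by
        rw [Finset.sum_add_distrib, Finset.sum_sub_distrib, ← Finset.mul_sum,
          ← Finset.sum_mul, Finset.sum_const, Finset.card_univ, Fintype.card_fin,
          nsmul_eq_mul]
        have h2 : ∑ q, 2 * x q = 2 * ∑ q, x q := by rw [Finset.mul_sum]
        rw [h2]
        ring
    _ ≤ 2*M*∑ q, (x q)^2 := by nlinarith [sq_nonneg (∑ q, x q)]


/-- Full surrogate calibration bound with constants:
`V(n^s) − V* ≤ K·χ²(ŝ,σ)/B` with `χ² = (1/M)∑ (ŝ_q/σ_q − 1)²` and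
`K = σ_high² M² L_max ρ / r_min²`, `ρ = σ_high√L_max/(σ_low√L_min)`, `r_min = s_floor/σ_high`. -/
theorem stmt_7 (M : ℕ) (hM : 1 ≤ M) (σ L shat : Fin M → ℝ)
    (σlow σhigh Lmin Lmax sfloor : ℝ)
    (hσlow : 0 < σlow) (hLmin : 0 < Lmin) (hsfloor : 0 < sfloor)
    (hσb : ∀ q, σlow ≤ σ q ∧ σ q ≤ σhigh)
    (hLb : ∀ q, Lmin ≤ L q ∧ L q ≤ Lmax)
    (hshat : ∀ q, sfloor ≤ shat q)
    (B : ℝ) (hB : 0 < B)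
    (S St : ℝ) (hS : S = ∑ k, σ k * Real.sqrt (L k))
    (hSt : St = ∑ k, shat k * Real.sqrt (L k))
    (ns : Fin M → ℝ) (hns : ∀ q, ns q = (B / St) * shat q / Real.sqrt (L q))
    (χsq ρ rmin K : ℝ)
    (hχ : χsq = (1 / M : ℝ) * ∑ q, (shat q / σ q - 1) ^ 2)
    (hρ : ρ = σhigh * Real.sqrt Lmax / (σlow * Real.sqrt Lmin))
    (hrmin : rmin = sfloor / σhigh)
    (hK : K = σhigh ^ 2 * (M : ℝ) ^ 2 * Lmax * ρ / rmin ^ 2) :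
    (∑ q, (σ q) ^ 2 / ns q) - S ^ 2 / B ≤ K * χsq / B := by

  have q0 : Fin M := ⟨0, hM⟩
  haveI : Nonempty (Fin M) := ⟨q0⟩
  set a : Fin M → ℝ := fun q => σ q * Real.sqrt (L q) with ha
  set r : Fin M → ℝ := fun q => shat q / σ q with hr
  have hσpos : ∀ q, 0 < σ q := fun q => lt_of_lt_of_le hσlow (hσb q).1
  have hLpos : ∀ q, 0 < L q := fun q => lt_of_lt_of_le hLmin (hLb q).1
  have hsqL : ∀ q, 0 < Real.sqrt (L q) := fun q => Real.sqrt_pos.2 (hLpos q)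
  have hσh : 0 < σhigh := lt_of_lt_of_le (hσpos q0) (hσb q0).2
  have hLmax : 0 < Lmax := lt_of_lt_of_le (hLpos q0) (hLb q0).2
  have hsLmax : 0 < Real.sqrt Lmax := Real.sqrt_pos.2 hLmax
  have hrminpos : 0 < rmin := by rw [hrmin]; positivity
  have hapos : ∀ q, 0 < a q := fun q => mul_pos (hσpos q) (hsqL q)
  have haub : ∀ q, a q ≤ σhigh * Real.sqrt Lmax := fun q =>
    mul_le_mul (hσb q).2 (Real.sqrt_le_sqrt (hLb q).2) (Real.sqrt_nonneg _) hσh.le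
  have hrlb : ∀ q, rmin ≤ r q := by
    intro q
    rw [hrmin]
    exact div_le_div₀ (le_trans hsfloor.le (hshat q)) (hshat q) (hσpos q) (hσb q).2
  have hrpos : ∀ q, 0 < r q := fun q => lt_of_lt_of_le hrminpos (hrlb q)
  have hσne : ∀ q, σ q ≠ 0 := fun q => (hσpos q).ne'
  have hStpos : 0 < St := by
    rw [hSt]
    exact Finset.sum_pos (fun q _ => mul_pos (lt_of_lt_of_le hsfloor (hshat q)) (hsqL q))
      Finset.univ_nonempty
  have hSt_eq : St = ∑ q, a q * r q := by
    rw [hSt]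
    refine Finset.sum_congr rfl (fun q _ => ?_)
    simp only [ha, hr]
    rw [eq_comm, mul_div_assoc', div_eq_iff (hσne q)]
    ring
  have hS_eq : S = ∑ q, a q := hS
  -- rewrite the variance sum
  have hVeq : ∑ q, (σ q) ^ 2 / ns q = St / B * ∑ q, a q / r q := by
    rw [Finset.mul_sum]
    refine Finset.sum_congr rfl (fun q _ => ?_)
    rw [hns q]
    have hsh : 0 < shat q := lt_of_lt_of_le hsfloor (hshat q)
    simp only [ha, hr]
    field_simp [ha, hr]
  set Ssq : ℝ := ∑ q, (shat q / σ q - 1) ^ 2 with hSsq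
  have hSsqnn : 0 ≤ Ssq := Finset.sum_nonneg fun q _ => sq_nonneg _
  set C : ℝ := σhigh ^ 2 * Lmax / rmin ^ 2 with hC
  have hCnn : 0 ≤ C := by positivity
  -- main inequality on products
  have hmain : (∑ q, a q * r q) * (∑ q, a q / r q) - (∑ q, a q) ^ 2 ≤ C * M * Ssq := by
    have e1 : (∑ q, a q * r q) * (∑ k, a k / r k)
        = ∑ q, ∑ k, a q * r q * (a k / r k) := Finset.sum_mul_sum _ _ _ _
    have e2 : (∑ q, a q * r q) * (∑ k, a k / r k)
        = ∑ q, ∑ k, a k * r k * (a q / r q) := by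
      rw [e1, Finset.sum_comm]
    have e3 : (∑ q, a q) ^ 2 = ∑ q, ∑ k, a q * a k := by
      rw [sq, Finset.sum_mul_sum]
    have key : 2 * ((∑ q, a q * r q) * (∑ q, a q / r q) - (∑ q, a q) ^ 2)
        = ∑ q, ∑ k, (a q * r q * (a k / r k) + a k * r k * (a q / r q) - 2 * (a q * a k)) := by
      simp only [Finset.sum_add_distrib, Finset.sum_sub_distrib]
      rw [← e1, ← e2]
      have h3 : ∑ q : Fin M, ∑ k, 2 * (a q * a k) = 2 * (∑ q, a q) ^ 2 := by
        rw [e3, Finset.mul_sum]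
        exact Finset.sum_congr rfl fun q _ => (Finset.mul_sum _ _ _).symm
      rw [h3]
      ring
    have bd1 : ∑ q, ∑ k, (a q * r q * (a k / r k) + a k * r k * (a q / r q) - 2 * (a q * a k))
        ≤ ∑ q, ∑ k, ((σhigh * Real.sqrt Lmax)^2 / rmin ^ 2) * (r q - r k) ^ 2 := by
      refine Finset.sum_le_sum (fun q _ => Finset.sum_le_sum (fun k _ => ?_))
      exact aux_term (σhigh * Real.sqrt Lmax) rmin (a q) (a k) (r q) (r k)
        (by positivity) hrminpos (hapos q).le (hapos k).le (haub q) (haub k)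
        (hrlb q) (hrlb k)
    have bd2 : ∑ q, ∑ k, ((σhigh * Real.sqrt Lmax)^2 / rmin ^ 2) * (r q - r k) ^ 2
        ≤ ((σhigh * Real.sqrt Lmax)^2 / rmin ^ 2) * (2 * M * Ssq) := by
      have := aux_sumsq M (fun q => r q - 1)
      simp only [sub_sub_sub_cancel_right] at this
      calc ∑ q, ∑ k, ((σhigh * Real.sqrt Lmax)^2 / rmin ^ 2) * (r q - r k) ^ 2
          = ((σhigh * Real.sqrt Lmax)^2 / rmin ^ 2) * ∑ q, ∑ k, (r q - r k) ^ 2 := by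
            simp only [Finset.mul_sum]
        _ ≤ ((σhigh * Real.sqrt Lmax)^2 / rmin ^ 2) * (2 * M * ∑ q, (r q - 1) ^ 2) := by
            apply mul_le_mul_of_nonneg_left _ (by positivity)
            exact this
        _ = ((σhigh * Real.sqrt Lmax)^2 / rmin ^ 2) * (2 * M * Ssq) := by
            rw [hSsq]
    have hA2 : (σhigh * Real.sqrt Lmax)^2 = σhigh ^ 2 * Lmax := by
      rw [mul_pow, Real.sq_sqrt hLmax.le]
    rw [hA2, ← hC] at bd1 bd2
    have hfin : 2 * ((∑ q, a q * r q) * (∑ q, a q / r q) - (∑ q, a q) ^ 2)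
        ≤ C * (2 * M * Ssq) := by rw [key]; exact le_trans bd1 bd2
    have h2 : C * (2 * M * Ssq) = 2 * (C * M * Ssq) := by ring
    linarith
  -- ρ ≥ 1
  have hρ1 : 1 ≤ ρ := by
    rw [hρ]
    have hden : 0 < σlow * Real.sqrt Lmin := by positivity
    rw [le_div_iff₀ hden, one_mul]
    exact mul_le_mul (le_trans (hσb q0).1 (hσb q0).2)
      (Real.sqrt_le_sqrt (le_trans (hLb q0).1 (hLb q0).2)) (Real.sqrt_nonneg _) hσh.le
  -- combine
  have hMpos : (0:ℝ) < M := by exact_mod_cast Nat.lt_of_lt_of_le Nat.zero_lt_one hM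
  have hKχ : C * M * Ssq ≤ K * χsq := by
    rw [hK, hχ, hC]
    have : σhigh ^ 2 * (M:ℝ) ^ 2 * Lmax * ρ / rmin ^ 2 * ((1/M) * Ssq)
        = (σhigh ^ 2 * Lmax / rmin ^ 2) * M * Ssq * ρ := by
      field_simp
    rw [this]
    nlinarith [mul_nonneg (mul_nonneg (mul_nonneg hCnn hMpos.le) hSsqnn) (sub_nonneg.2 hρ1),
      mul_nonneg (mul_nonneg hCnn hMpos.le) hSsqnn]
  have hfinal : St * (∑ q, a q / r q) - (∑ q, a q) ^ 2 ≤ K * χsq := by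
    rw [hSt_eq]; exact le_trans hmain hKχ
  rw [hVeq, hS_eq, div_mul_eq_mul_div, ← sub_div, div_le_div_iff₀ hB hB]
  nlinarith [mul_le_mul_of_nonneg_right hfinal hB.le]
end
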